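/- Every vertex of the ι-invariant Birkhoff polytope B_d^ι is the image under the linear map M ↦ (M + ιM)/2 of some vertex of the Birkhoff polytope B_d; consequently every entry of a vertex of B_d^ι lies in {0, 1/2, 1}. -/

import Mathlib

/-!
By Birkhoff–von Neumann, `B_d` is the convex hull of the permutation matrices. For involutive
`φ, ψ` the symmetrization `S M = (M + ιM)/2` is a linear map fixing `B_d^ι` pointwise and mapping
`B_d` into it, so `B_d^ι = S(B_d)` is the convex hull of the `S P_σ`. Extreme points of a convex
hull lie in the generating set, so every vertex of `B_d^ι` is some `S P_σ`, whose entries are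
averages of two entries in `{0, 1}`.
-/

/-- The `ι`-invariant Birkhoff polytope for the involution `(ιM)_{ij} = M_{φ(i)ψ(j)}`. -/
def invBirkhoff (d : ℕ) (φ ψ : Equiv.Perm (Fin d)) : Set (Matrix (Fin d) (Fin d) ℝ) :=
  {M | M ∈ doublyStochastic ℝ (Fin d) ∧ (fun i j => M (φ i) (ψ j)) = M}

open Matrix

namespace Matrix

variable {R n : Type*}

lemma submatrix_mem_doublyStochastic [Fintype n] [DecidableEq n] [Semiring R] [PartialOrder R]
    [IsOrderedRing R] {M : Matrix n n R} (φ ψ : Equiv.Perm n) (hM : M ∈ doublyStochastic R n) :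
    M.submatrix φ ψ ∈ doublyStochastic R n :=
  reindex_mem_doublyStochastic (e₁ := φ.symm) (e₂ := ψ.symm) hM

lemma permMatrix_apply_eq_zero_or_eq_one [DecidableEq n] [Semiring R] (σ : Equiv.Perm n)
    (i j : n) : σ.permMatrix R i j = 0 ∨ σ.permMatrix R i j = 1 := by
  by_cases h : σ i = j <;>
    simp [Equiv.Perm.permMatrix, PEquiv.toMatrix_apply, h]

variable [Field R]

/-- The symmetrization `M ↦ (M + ιM) / 2` for `(ιM)_{ij} = M_{φ(i)ψ(j)}`. -/
noncomputable def symmetrize (φ ψ : Equiv.Perm n) : Matrix n n R →ₗ[R] Matrix n n R :=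
  (2 : R)⁻¹ • (LinearMap.id + (reindexLinearEquiv R R φ.symm ψ.symm).toLinearMap)

lemma symmetrize_apply (φ ψ : Equiv.Perm n) (M : Matrix n n R) :
    symmetrize φ ψ M = (2 : R)⁻¹ • (M + M.submatrix φ ψ) :=
  rfl

lemma symmetrize_apply_apply (φ ψ : Equiv.Perm n) (M : Matrix n n R) (i j : n) :
    symmetrize φ ψ M i j = (M i j + M (φ i) (ψ j)) / 2 := by
  simp only [symmetrize_apply, smul_apply, add_apply, submatrix_apply, smul_eq_mul]
  ring

lemma symmetrize_permMatrix_apply_mem [DecidableEq n] [CharZero R] (φ ψ σ : Equiv.Perm n)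
    (i j : n) :
    symmetrize φ ψ (σ.permMatrix R) i j ∈ ({0, 1 / 2, 1} : Set R) := by
  rw [symmetrize_apply_apply]
  rcases permMatrix_apply_eq_zero_or_eq_one (R := R) σ i j with h₁ | h₁ <;>
    rcases permMatrix_apply_eq_zero_or_eq_one (R := R) σ (φ i) (ψ j) with h₂ | h₂ <;>
    rw [h₁, h₂] <;> norm_num

variable [Fintype n] [DecidableEq n] [LinearOrder R] [IsStrictOrderedRing R]

lemma symmetrize_mem_doublyStochastic (φ ψ : Equiv.Perm n) {M : Matrix n n R}
    (hM : M ∈ doublyStochastic R n) : symmetrize φ ψ M ∈ doublyStochastic R n := by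
  rw [symmetrize_apply, smul_add]
  exact convex_doublyStochastic hM (submatrix_mem_doublyStochastic φ ψ hM)
    (by norm_num) (by norm_num) (by norm_num)

lemma image_symmetrize_doublyStochastic {φ ψ : Equiv.Perm n} (hφ : Function.Involutive φ)
    (hψ : Function.Involutive ψ) :
    symmetrize φ ψ '' doublyStochastic R n =
      {M | M ∈ doublyStochastic R n ∧ M.submatrix φ ψ = M} := by
  ext M
  constructor
  · rintro ⟨X, hX, rfl⟩
    refine ⟨symmetrize_mem_doublyStochastic φ ψ hX, ?_⟩
    ext i j
    simp only [submatrix_apply, symmetrize_apply_apply, hφ i, hψ j, add_comm]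
  · rintro ⟨hM, hinv⟩
    refine ⟨M, hM, ?_⟩
    rw [symmetrize_apply, hinv, ← two_smul R M, smul_smul, inv_mul_cancel₀ two_ne_zero, one_smul]

lemma mem_extremePoints_image_symmetrize {φ ψ : Equiv.Perm n} {M : Matrix n n R}
    (hM : M ∈ Set.extremePoints R (symmetrize φ ψ '' doublyStochastic R n)) :
    ∃ σ : Equiv.Perm n, M = symmetrize φ ψ (σ.permMatrix R) := by
  rw [doublyStochastic_eq_convexHull_permMatrix, LinearMap.image_convexHull] at hM
  obtain ⟨_, ⟨σ, rfl⟩, rfl⟩ := extremePoints_convexHull_subset hM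
  exact ⟨σ, rfl⟩

end Matrix

theorem stmt_5 (d : ℕ) (φ ψ : Equiv.Perm (Fin d)) (hφ : φ * φ = 1) (hψ : ψ * ψ = 1)
    (M : Matrix (Fin d) (Fin d) ℝ)
    (hM : M ∈ Set.extremePoints ℝ (invBirkhoff d φ ψ)) :
    (∃ N ∈ Set.extremePoints ℝ
        (doublyStochastic ℝ (Fin d) : Set (Matrix (Fin d) (Fin d) ℝ)),
      M = (2 : ℝ)⁻¹ • (N + Matrix.of fun i j => N (φ i) (ψ j))) ∧
    ∀ i j, M i j = 0 ∨ M i j = 1 / 2 ∨ M i j = 1 := by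
  have hinv : invBirkhoff d φ ψ = symmetrize φ ψ '' doublyStochastic ℝ (Fin d) :=
    (image_symmetrize_doublyStochastic (DFunLike.congr_fun hφ) (DFunLike.congr_fun hψ)).symm
  rw [hinv] at hM
  obtain ⟨σ, rfl⟩ := mem_extremePoints_image_symmetrize hM
  refine ⟨⟨σ.permMatrix ℝ, ?_, rfl⟩, symmetrize_permMatrix_apply_mem φ ψ σ⟩
  rw [extremePoints_doublyStochastic]
  exact ⟨σ, rfl⟩
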